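/- arXiv:1906.04529 — 3 statements merged into one kernel-verified Lean document; each statement's English description precedes it below -/
import Mathlib

section
/- For all 0 ≤ t ≤ σ², P( σ̂²_mean − σ² ≤ −t ) ≤ exp( − K_f² t² / (2V) ). -/
/-!
Chernoff's method for the lower tail. A Gamma(a, r) variable has `E e^{-θX} = (1 + θ/r)^{-a}`,
and `log (1 + x) ≥ x - x²/2` for `x ≥ 0` shows that this is at most the Gaussian value
`exp (-θ a/r + θ² (a/r²)/2)`: the lower tail of a Gamma law is sub-Gaussian with its variance as
proxy. For `c_k = (σ²/n_k) Γ_{n_k}` this gives `E e^{-θ c_k} ≤ exp (-θσ² + θ² σ⁴/n_k)`; by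
independence the bounds multiply, and the Chernoff bound at `θ = K t / V` gives the claim.
-/

open MeasureTheory ProbabilityTheory Real Finset

theorem Real.sub_sq_div_two_le_log_one_add {x : ℝ} (hx : 0 ≤ x) : x - x ^ 2 / 2 ≤ log (1 + x) :=
  calc x - x ^ 2 / 2 ≤ 2 * x / (x + 2) := by
        rw [le_div_iff₀ (by positivity)]; nlinarith [pow_nonneg hx 3]
    _ ≤ log (1 + x) := le_log_one_add_of_nonneg hx

section Gamma

variable {a r u : ℝ}

theorem gammaPDF_mul_ofReal_exp_mul (ha : 0 < a) (hr : 0 < r) (hu : u < r) (x : ℝ) :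
    gammaPDF a r x * ENNReal.ofReal (exp (u * x))
      = ENNReal.ofReal ((r / (r - u)) ^ a) * gammaPDF a (r - u) x := by
  rcases lt_or_ge x 0 with hx | hx
  · simp [gammaPDF_of_neg hx]
  have hru : 0 < r - u := by linarith
  rw [gammaPDF_of_nonneg hx, gammaPDF_of_nonneg hx,
    ← ENNReal.ofReal_mul (by positivity), ← ENNReal.ofReal_mul (by positivity)]
  congr 1
  have hpow : (r / (r - u)) ^ a * (r - u) ^ a = r ^ a := by
    rw [div_rpow (by linarith) hru.le, div_mul_cancel₀ _ (rpow_pos_of_pos hru a).ne']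
  have hexp : exp (-(r * x)) * exp (u * x) = exp (-((r - u) * x)) := by
    rw [← exp_add]; ring_nf
  rw [← hpow, mul_assoc, hexp]
  ring

theorem lintegral_ofReal_exp_mul_gammaMeasure (ha : 0 < a) (hr : 0 < r) (hu : u < r) :
    ∫⁻ x, ENNReal.ofReal (exp (u * x)) ∂gammaMeasure a r = ENNReal.ofReal ((r / (r - u)) ^ a) := by
  have hmeas (b : ℝ) : Measurable (gammaPDF a b) := (measurable_gammaPDFReal a b).ennreal_ofReal
  rw [gammaMeasure, lintegral_withDensity_eq_lintegral_mul _ (hmeas r) (by fun_prop)]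
  simp only [Pi.mul_apply, gammaPDF_mul_ofReal_exp_mul ha hr hu]
  rw [lintegral_const_mul _ (hmeas (r - u)),
    lintegral_gammaPDF_eq_one ha (by linarith), mul_one]

theorem mgf_id_gammaMeasure (ha : 0 < a) (hr : 0 < r) (hu : u < r) :
    mgf id (gammaMeasure a r) u = (r / (r - u)) ^ a := by
  have hru : 0 < r - u := by linarith
  rw [mgf, integral_eq_lintegral_of_nonneg_ae (ae_of_all _ fun x => (exp_pos _).le)
    (by fun_prop)]
  simp only [id]
  rw [lintegral_ofReal_exp_mul_gammaMeasure ha hr hu, ENNReal.toReal_ofReal (by positivity)]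

theorem mgf_id_gammaMeasure_neg_le (ha : 0 < a) (hr : 0 < r) {θ : ℝ} (hθ : 0 ≤ θ) :
    mgf id (gammaMeasure a r) (-θ) ≤ exp (-θ * (a / r) + θ ^ 2 * (a / r ^ 2) / 2) := by
  have hx : 0 ≤ θ / r := by positivity
  have hbase : r / (r - -θ) = (1 + θ / r)⁻¹ := by
    rw [sub_neg_eq_add, one_add_div hr.ne', inv_div]
  rw [mgf_id_gammaMeasure ha hr (by linarith), hbase, rpow_def_of_pos (by positivity), log_inv,
    exp_le_exp]
  calc -log (1 + θ / r) * a ≤ -(θ / r - (θ / r) ^ 2 / 2) * a := by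
        gcongr; exact Real.sub_sq_div_two_le_log_one_add hx
    _ = -θ * (a / r) + θ ^ 2 * (a / r ^ 2) / 2 := by ring

end Gamma

section ScaledGamma

variable {Ω : Type*} [MeasurableSpace Ω] {μ : Measure Ω} {X : Ω → ℝ} {s a r : ℝ}

theorem mgf_eq_of_map_eq_map_mul_gammaMeasure (hX : AEMeasurable X μ)
    (hlaw : μ.map X = (gammaMeasure a r).map (fun x => s * x)) (u : ℝ) :
    mgf X μ u = mgf id (gammaMeasure a r) (s * u) := by
  rw [← mgf_id_map hX, hlaw, mgf_id_map (by fun_prop)]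
  exact mgf_const_mul (X := id) s

theorem integrable_exp_mul_of_map_eq_map_mul_gammaMeasure [IsProbabilityMeasure μ]
    (hX : AEMeasurable X μ) (hlaw : μ.map X = (gammaMeasure a r).map (fun x => s * x))
    (ha : 0 < a) (hr : 0 < r) {u : ℝ} (hu : s * u < r) :
    Integrable (fun ω => exp (u * X ω)) μ := by
  rw [← mgf_pos_iff, mgf_eq_of_map_eq_map_mul_gammaMeasure hX hlaw,
    mgf_id_gammaMeasure ha hr hu]
  have : 0 < r - s * u := by linarith
  positivity

theorem mgf_neg_le_of_map_eq_map_mul_gammaMeasure (hX : AEMeasurable X μ)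
    (hlaw : μ.map X = (gammaMeasure a r).map (fun x => s * x))
    (ha : 0 < a) (hr : 0 < r) (hs : 0 ≤ s) {θ : ℝ} (hθ : 0 ≤ θ) :
    mgf X μ (-θ) ≤ exp (-θ * (s * a / r) + θ ^ 2 * (s ^ 2 * a / r ^ 2) / 2) := by
  rw [mgf_eq_of_map_eq_map_mul_gammaMeasure hX hlaw, mul_neg]
  convert mgf_id_gammaMeasure_neg_le ha hr (mul_nonneg hs hθ) using 3 <;> ring

end ScaledGamma

namespace ProbabilityTheory

variable {Ω ι : Type*} [MeasurableSpace Ω] {μ : Measure Ω} {X : ι → Ω → ℝ} {m v : ι → ℝ}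

theorem iIndepFun.measureReal_sum_le_sub_le_exp (hindep : iIndepFun X μ)
    (hmeas : ∀ i, Measurable (X i)) (s : Finset ι) {θ : ℝ} (hθ : 0 ≤ θ)
    (hint : ∀ i ∈ s, Integrable (fun ω => exp (-θ * X i ω)) μ)
    (hmgf : ∀ i ∈ s, mgf (X i) μ (-θ) ≤ exp (-θ * m i + θ ^ 2 * v i / 2)) (ε : ℝ) :
    μ.real {ω | ∑ i ∈ s, X i ω ≤ ∑ i ∈ s, m i - ε}
      ≤ exp (-θ * ε + θ ^ 2 * (∑ i ∈ s, v i) / 2) := by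
  have := hindep.isProbabilityMeasure
  have hchernoff := measure_le_le_exp_mul_mgf (X := ∑ i ∈ s, X i) (∑ i ∈ s, m i - ε)
    (neg_nonpos.mpr hθ) (hindep.integrable_exp_mul_sum hmeas hint)
  simp only [Finset.sum_apply] at hchernoff
  refine hchernoff.trans ?_
  rw [hindep.mgf_sum hmeas]
  calc exp (-(-θ) * (∑ i ∈ s, m i - ε)) * ∏ i ∈ s, mgf (X i) μ (-θ)
      ≤ exp (-(-θ) * (∑ i ∈ s, m i - ε)) * ∏ i ∈ s, exp (-θ * m i + θ ^ 2 * v i / 2) := by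
        gcongr with i hi
        exacts [fun i _ => mgf_nonneg, hmgf i hi]
    _ = exp (-θ * ε + θ ^ 2 * (∑ i ∈ s, v i) / 2) := by
        rw [← exp_sum, ← exp_add, sum_add_distrib, ← mul_sum, ← sum_div, ← mul_sum]
        ring_nf

theorem iIndepFun.measureReal_sum_le_sub_le_exp_neg_sq (hindep : iIndepFun X μ)
    (hmeas : ∀ i, Measurable (X i)) (s : Finset ι) (hv : ∀ i ∈ s, 0 ≤ v i)
    (hint : ∀ θ, 0 ≤ θ → ∀ i ∈ s, Integrable (fun ω => exp (-θ * X i ω)) μ)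
    (hmgf : ∀ θ, 0 ≤ θ → ∀ i ∈ s, mgf (X i) μ (-θ) ≤ exp (-θ * m i + θ ^ 2 * v i / 2))
    {ε : ℝ} (hε : 0 ≤ ε) :
    μ.real {ω | ∑ i ∈ s, X i ω ≤ ∑ i ∈ s, m i - ε} ≤ exp (-(ε ^ 2 / (2 * ∑ i ∈ s, v i))) := by
  set V := ∑ i ∈ s, v i
  have hθ : 0 ≤ ε / V := div_nonneg hε (sum_nonneg hv)
  refine (hindep.measureReal_sum_le_sub_le_exp hmeas s hθ (hint _ hθ) (hmgf _ hθ) ε).trans_eq ?_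
  -- `θ = ε / V` is the optimal choice; for `V = 0` both sides are `exp 0` by `x / 0 = 0`
  rcases eq_or_ne V 0 with hV | hV
  · simp [hV]
  · congr 1; field_simp; ring

end ProbabilityTheory

theorem Fin.sum_le_sum_const_sub_of_mean_sub_le {K : ℕ} (x : Fin K → ℝ) {a t : ℝ}
    (h : (1 / (K : ℝ)) * ∑ k, x k - a ≤ -t) : ∑ k, x k ≤ ∑ _k : Fin K, a - K * t := by
  rcases K.eq_zero_or_pos with rfl | hK
  · simp
  simp only [sum_const, nsmul_eq_mul]
  rw [one_div, inv_mul_eq_div, sub_le_iff_le_add, div_le_iff₀ (by exact_mod_cast hK)] at h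
  linarith

theorem stmt4_general
    {Ω : Type*} [MeasureSpace Ω] [IsProbabilityMeasure (ℙ : Measure Ω)]
    {K : ℕ} {σ : ℝ}
    (nk : Fin K → ℕ) (hnk : ∀ k, 1 ≤ nk k)
    (c : Fin K → Ω → ℝ) (hcmeas : ∀ k, Measurable (c k))
    (hlaw : ∀ k, Measure.map (c k) ℙ
      = Measure.map (fun x => σ ^ 2 / (nk k : ℝ) * x) (gammaMeasure ((nk k : ℝ) / 2) (1 / 2)))
    (hindep : iIndepFun c ℙ)
    (t : ℝ) (ht : 0 ≤ t) :
    ℙ {ω | (1 / (K : ℝ)) * ∑ k, c k ω - σ ^ 2 ≤ -t}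
      ≤ ENNReal.ofReal (Real.exp (- ((K : ℝ) ^ 2 * t ^ 2 /
          (2 * (2 * σ ^ 4 * ∑ k, 1 / (nk k : ℝ)))))) := by
  have hn (k : Fin K) : (0 : ℝ) < nk k := by exact_mod_cast hnk k
  have hscale (k : Fin K) : 0 ≤ σ ^ 2 / nk k := div_nonneg (sq_nonneg σ) (hn k).le
  have hint (θ : ℝ) (hθ : 0 ≤ θ) (k : Fin K) (_ : k ∈ univ) :
      Integrable (fun ω => exp (-θ * c k ω)) ℙ :=
    integrable_exp_mul_of_map_eq_map_mul_gammaMeasure (hcmeas k).aemeasurable (hlaw k)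
      (half_pos (hn k)) one_half_pos (by nlinarith [hscale k])
  have hmgf (θ : ℝ) (hθ : 0 ≤ θ) (k : Fin K) (_ : k ∈ univ) :
      mgf (c k) ℙ (-θ) ≤ exp (-θ * σ ^ 2 + θ ^ 2 * (2 * σ ^ 4 * (1 / nk k)) / 2) := by
    convert mgf_neg_le_of_map_eq_map_mul_gammaMeasure (hcmeas k).aemeasurable (hlaw k)
      (half_pos (hn k)) one_half_pos (hscale k) hθ using 4 <;> field_simp [(hn k).ne']
  have htail := hindep.measureReal_sum_le_sub_le_exp_neg_sq hcmeas univ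
    (fun _ _ => by positivity) hint hmgf (mul_nonneg (Nat.cast_nonneg K) ht)
  rw [← mul_sum, mul_pow] at htail
  calc ℙ _ ≤ ℙ {ω | ∑ k, c k ω ≤ ∑ _k : Fin K, σ ^ 2 - K * t} :=
        measure_mono fun ω => Fin.sum_le_sum_const_sub_of_mean_sub_le (c · ω)
    _ ≤ _ := by rw [← ofReal_measureReal]; exact ENNReal.ofReal_le_ofReal htail

/-- Let `(c k)_{k < K}` (`K = K_f ≥ 1`) be independent random variables with
`c k` distributed as `(σ²/n_k)·Γ_{n_k}` where `Γ_{n_k} ~ χ²(n_k)` (Gamma with shape `n_k/2` and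
rate `1/2`), and let `σ̂²_mean = (1/K) Σ_k c_k` and `V = 2σ⁴ Σ_k 1/n_k`.  Then for all
`0 ≤ t ≤ σ²`, `P(σ̂²_mean − σ² ≤ −t) ≤ exp(− K² t² / (2V))`. -/
theorem stmt4
    {Ω : Type*} [MeasureSpace Ω] [IsProbabilityMeasure (ℙ : Measure Ω)]
    {K : ℕ} (hK : 1 ≤ K) {σ : ℝ} (hσ : 0 < σ)
    (nk : Fin K → ℕ) (hnk : ∀ k, 1 ≤ nk k)
    (c : Fin K → Ω → ℝ) (hcmeas : ∀ k, Measurable (c k))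
    (hlaw : ∀ k, Measure.map (c k) ℙ
      = Measure.map (fun x => σ ^ 2 / (nk k : ℝ) * x) (gammaMeasure ((nk k : ℝ) / 2) (1 / 2)))
    (hindep : iIndepFun c ℙ)
    (t : ℝ) (ht : 0 ≤ t) (ht' : t ≤ σ ^ 2) :
    ℙ {ω | (1 / (K : ℝ)) * ∑ k, c k ω - σ ^ 2 ≤ -t}
      ≤ ENNReal.ofReal (Real.exp (- ((K : ℝ) ^ 2 * t ^ 2 /
          (2 * (2 * σ ^ 4 * ∑ k, 1 / (nk k : ℝ)))))) :=
  stmt4_general nk hnk c hcmeas hlaw hindep t ht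
end

section
/- For all t ≥ 0 such that p⁺(t) ≤ 1/2, P( σ̂²_med ≥ β⁻¹σ² + 2σ²β⁻¹ t ) ≤ exp( (K_f/2) · ln( 4 p⁺(t)(1 − p⁺(t)) ) ), where p⁺(t) = P( Γ_{n_∞} ≥ n_∞ + 2 n_∞ t ) and Γ_{n_∞} ~ χ²(n_∞). -/
open MeasureTheory ProbabilityTheory Real
open scoped ENNReal

/-- The sample median of `m` real values: the middle order statistic if `m` is odd,
the average of the two middle order statistics if `m` is even. -/
noncomputable def sampleMedian {m : ℕ} (x : Fin m → ℝ) : ℝ :=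
  let l := List.insertionSort (· ≤ ·) (List.ofFn x)
  if m % 2 = 1 then l.getD (m / 2) 0
  else (l.getD (m / 2 - 1) 0 + l.getD (m / 2) 0) / 2

/-! If the median of the `c k` is at least `a`, then so are at least half of them. Each event
`a ≤ c k` is a tail of `(σ² / n_k) χ²(n_k)`, i.e. a `χ²(n_k)` tail beyond `n_∞ (n_k / n₀) (1 + 2t)`,
which is at most `p⁺(t)` because `n_k / n₀ ≥ 1` and chi-square tails grow with the degrees of
freedom: the ratio of the `Γ(b)` and `Γ(a)` densities is `C x ^ (b - a)`, increasing in `x`, so the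
two densities cross once. The events are independent with probability at most `p ≤ 1/2`, and the
Chernoff bound for their count at the exponent `λ = log ((1 - p) / p)` gives
`exp (-λ K / 2) (2 (1 - p)) ^ K = (4 p (1 - p)) ^ (K / 2)`. -/

open Finset

theorem List.countP_ofFn {α : Type*} {m : ℕ} (x : Fin m → α) (P : α → Prop) [DecidablePred P] :
    (List.ofFn x).countP (P ·) = #{i | P (x i)} := by
  rw [Finset.card_def, Finset.filter_val, ← Multiset.countP_map, Fin.univ_val_map,
    Multiset.coe_countP]

theorem List.Pairwise.getD_le_getD {α : Type*} [Preorder α] {l : List α}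
    (hl : l.Pairwise (· ≤ ·)) {i j : ℕ} (hij : i ≤ j) (hj : j < l.length) (d : α) :
    l.getD i d ≤ l.getD j d := by
  rw [List.getD_eq_getElem _ _ (hij.trans_lt hj), List.getD_eq_getElem _ _ hj]
  exact hl.rel_get_of_le (a := ⟨i, hij.trans_lt hj⟩) (b := ⟨j, hj⟩) hij

theorem List.Pairwise.length_sub_le_countP {α : Type*} [LinearOrder α] {l : List α}
    (hl : l.Pairwise (· ≤ ·)) {a d : α} {i : ℕ} (ha : a ≤ l.getD i d) :
    l.length - i ≤ l.countP (a ≤ ·) := by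
  have hdrop : ∀ x ∈ l.drop i, a ≤ x := by
    intro x hx
    obtain ⟨j, hj, rfl⟩ := List.mem_iff_getElem.1 hx
    rw [List.getElem_drop, ← List.getD_eq_getElem _ d]
    exact ha.trans (hl.getD_le_getD (by omega) (by simp at hj; omega) d)
  calc l.length - i = (l.drop i).countP (a ≤ ·) := by
        rw [List.countP_eq_length.2 (by simpa using hdrop), List.length_drop]
    _ ≤ l.countP (a ≤ ·) := (List.drop_sublist i l).countP_le

theorem sampleMedian_le_getD_half {m : ℕ} (x : Fin m → ℝ) :
    sampleMedian x ≤ (List.insertionSort (· ≤ ·) (List.ofFn x)).getD (m / 2) 0 := by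
  set l := List.insertionSort (· ≤ ·) (List.ofFn x) with hl
  have hsorted : l.Pairwise (· ≤ ·) := List.pairwise_insertionSort _ _
  have hlen : l.length = m := by simp [hl]
  unfold sampleMedian
  rw [← hl]
  split_ifs
  · exact le_rfl
  · rcases Nat.eq_zero_or_pos m with rfl | hm
    · simp [hl]
    · have := hsorted.getD_le_getD (Nat.sub_le (m / 2) 1) (by omega) 0
      linarith

theorem le_two_mul_card_of_le_sampleMedian {m : ℕ} {x : Fin m → ℝ} {a : ℝ}
    (ha : a ≤ sampleMedian x) : m ≤ 2 * #{i | a ≤ x i} := by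
  set l := List.insertionSort (· ≤ ·) (List.ofFn x) with hl
  have hlen : l.length = m := by simp [hl]
  have key := (List.pairwise_insertionSort _ _).length_sub_le_countP
    (ha.trans (sampleMedian_le_getD_half x)) (i := m / 2)
  rw [← hl, hlen, (List.perm_insertionSort _ _).countP_eq, List.countP_ofFn] at key
  omega

section GammaTail

open Set

theorem withDensity_Ici_le_of_single_crossing {μ : Measure ℝ} {f g : ℝ → ℝ≥0∞}
    [IsProbabilityMeasure (μ.withDensity f)] [IsProbabilityMeasure (μ.withDensity g)] {x₀ : ℝ}
    (hge : ∀ᵐ x ∂μ, x₀ ≤ x → f x ≤ g x) (hlt : ∀ᵐ x ∂μ, x < x₀ → g x ≤ f x) (s : ℝ) :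
    μ.withDensity f (Ici s) ≤ μ.withDensity g (Ici s) := by
  rcases le_or_gt x₀ s with hs | hs
  · rw [withDensity_apply _ measurableSet_Ici, withDensity_apply _ measurableSet_Ici]
    exact setLIntegral_mono_ae' measurableSet_Ici (hge.mono fun x hx hsx => hx (hs.trans hsx))
  · rw [← compl_Iio, prob_compl_eq_one_sub measurableSet_Iio,
      prob_compl_eq_one_sub measurableSet_Iio, withDensity_apply _ measurableSet_Iio,
      withDensity_apply _ measurableSet_Iio]
    gcongr 1 - ?_
    exact setLIntegral_mono_ae' measurableSet_Iio (hlt.mono fun x hx hxs => hx (hxs.trans hs))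

theorem gammaPDFReal_eq_mul_rpow {a b r x : ℝ} (ha : 0 < a) (hr : 0 < r) (hx : 0 < x) :
    gammaPDFReal b r x
      = gammaPDFReal a r x * ((r ^ b / Gamma b) / (r ^ a / Gamma a) * x ^ (b - a)) := by
  have hGa : 0 < Gamma a := Gamma_pos_of_pos ha
  have hra : 0 < r ^ a := rpow_pos_of_pos hr a
  have hsplit : x ^ (b - 1) = x ^ (a - 1) * x ^ (b - a) := by
    rw [← rpow_add hx]; ring_nf
  rw [gammaPDFReal, gammaPDFReal, if_pos hx.le, if_pos hx.le, hsplit]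
  field_simp

theorem gammaMeasure_Ici_le_of_le {a b r : ℝ} (ha : 0 < a) (hab : a ≤ b) (hr : 0 < r) (s : ℝ) :
    gammaMeasure a r (Ici s) ≤ gammaMeasure b r (Ici s) := by
  rcases hab.eq_or_lt with rfl | hab
  · exact le_rfl
  have hb : 0 < b := ha.trans hab
  have : IsProbabilityMeasure (volume.withDensity (gammaPDF a r)) :=
    isProbabilityMeasure_gammaMeasure ha hr
  have : IsProbabilityMeasure (volume.withDensity (gammaPDF b r)) :=
    isProbabilityMeasure_gammaMeasure hb hr
  set C := (r ^ b / Gamma b) / (r ^ a / Gamma a)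
  have hC : 0 < C := by
    have := Gamma_pos_of_pos ha; have := Gamma_pos_of_pos hb
    have := rpow_pos_of_pos hr a; have := rpow_pos_of_pos hr b
    positivity
  set x₀ := C⁻¹ ^ (b - a)⁻¹
  have hx₀ : 0 < x₀ := rpow_pos_of_pos (inv_pos.2 hC) _
  have hratio : ∀ x, 0 < x → (x₀ ≤ x ↔ 1 ≤ C * x ^ (b - a)) := fun x hx => by
    rw [← rpow_le_rpow_iff hx₀.le hx.le (sub_pos.2 hab), ← rpow_mul (inv_pos.2 hC).le,
      inv_mul_cancel₀ (sub_pos.2 hab).ne', rpow_one, inv_le_iff_one_le_mul₀ hC, mul_comm]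
  refine withDensity_Ici_le_of_single_crossing (x₀ := x₀) (ae_of_all _ fun x hx => ?_)
    ((volume.ae_ne 0).mono fun x hx0 hx => ?_) s
  · have hxpos := hx₀.trans_le hx
    rw [gammaPDF, gammaPDF, gammaPDFReal_eq_mul_rpow (b := b) ha hr hxpos]
    exact ENNReal.ofReal_le_ofReal <| le_mul_of_one_le_right (gammaPDFReal_nonneg ha hr x)
      ((hratio x hxpos).1 hx)
  · rcases hx0.lt_or_gt with hneg | hxpos
    · rw [gammaPDF_of_neg hneg, gammaPDF_of_neg hneg]
    · rw [gammaPDF, gammaPDF, gammaPDFReal_eq_mul_rpow (b := b) ha hr hxpos]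
      exact ENNReal.ofReal_le_ofReal <| mul_le_of_le_one_right (gammaPDFReal_nonneg ha hr x)
        (not_le.1 (mt (hratio x hxpos).2 hx.not_ge)).le

theorem gammaMeasure_map_const_mul_tail_le {n n₀ N : ℕ} (hn₀ : 0 < n₀) (hn₀n : n₀ ≤ n)
    (hnN : n ≤ N) {σ t : ℝ} (hσ : σ ≠ 0) (ht : 0 ≤ t) :
    (gammaMeasure (n / 2) (1 / 2)).map (fun x => σ ^ 2 / n * x)
        {x | ((n₀ : ℝ) / N)⁻¹ * σ ^ 2 + 2 * σ ^ 2 * ((n₀ : ℝ) / N)⁻¹ * t ≤ x}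
      ≤ gammaMeasure (N / 2) (1 / 2) {x | N + 2 * N * t ≤ x} := by
  have hn : (0 : ℝ) < n := by exact_mod_cast hn₀.trans_le hn₀n
  have hn₀' : (0 : ℝ) < n₀ := by exact_mod_cast hn₀
  have hσ2 : 0 < σ ^ 2 := by positivity
  have hthreshold : (N : ℝ) + 2 * N * t
      ≤ (((n₀ : ℝ) / N)⁻¹ * σ ^ 2 + 2 * σ ^ 2 * ((n₀ : ℝ) / N)⁻¹ * t) / (σ ^ 2 / n) := by
    have hrewrite : (((n₀ : ℝ) / N)⁻¹ * σ ^ 2 + 2 * σ ^ 2 * ((n₀ : ℝ) / N)⁻¹ * t) / (σ ^ 2 / n)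
        = (N + 2 * N * t) * (n / n₀) := by
      field_simp
    rw [hrewrite]
    exact le_mul_of_one_le_right (by positivity) ((one_le_div hn₀').2 (Nat.cast_le.2 hn₀n))
  change (gammaMeasure _ _).map _ (Ici _) ≤ gammaMeasure _ _ (Ici _)
  rw [Measure.map_apply (measurable_const_mul _) measurableSet_Ici,
    preimage_const_mul_Ici₀ _ (by positivity)]
  calc _ ≤ gammaMeasure (n / 2) (1 / 2) (Ici ((N : ℝ) + 2 * N * t)) :=
        measure_mono (Ici_subset_Ici.2 hthreshold)
    _ ≤ _ := gammaMeasure_Ici_le_of_le (by positivity) (by gcongr)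
        (by norm_num) _

end GammaTail

namespace ProbabilityTheory

variable {Ω : Type*} [MeasurableSpace Ω] {μ : Measure Ω}

theorem mgf_indicator_one [IsProbabilityMeasure μ] {E : Set Ω} (hE : MeasurableSet E) (t : ℝ) :
    mgf (E.indicator fun _ => 1) μ t = 1 + μ.real E * (exp t - 1) := by
  have hexp : (fun ω => exp (t * E.indicator (fun _ => 1) ω))
      = fun ω => E.indicator (fun _ => exp t - 1) ω + 1 := by
    ext ω
    by_cases hω : ω ∈ E <;> simp [hω]
  rw [mgf, hexp, integral_add ((integrable_const _).indicator hE) (integrable_const 1),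
    integral_indicator_const _ hE, integral_const, probReal_univ, smul_eq_mul, smul_eq_mul]
  ring

open Classical in
theorem iIndepSet.measure_card_le_two_mul_card_le {ι : Type*} [Fintype ι] {E : ι → Set Ω}
    (hind : iIndepSet E μ) (hE : ∀ i, MeasurableSet (E i)) {p : ℝ} (hp0 : 0 ≤ p)
    (hp : ∀ i, μ.real (E i) ≤ p) (hp2 : p ≤ 1 / 2) :
    μ {ω | Fintype.card ι ≤ 2 * #{i | ω ∈ E i}}
      ≤ ENNReal.ofReal (exp (Fintype.card ι / 2 * log (4 * p * (1 - p)))) := by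
  have := hind.isProbabilityMeasure
  rcases hp0.eq_or_lt with rfl | hp0
  · simpa using prob_le_one
  set q := 1 - p
  have hq : 0 < q := by linarith
  set X : ι → Ω → ℝ := fun i => (E i).indicator fun _ => 1
  have hX : ∀ i, Measurable (X i) := fun i => measurable_const.indicator (hE i)
  have hsum : ∀ ω, (∑ i, X i) ω = #{i | ω ∈ E i} := fun ω => by
    simp [X, Finset.sum_apply, Set.indicator_apply, Finset.sum_boole]
  have hevent : {ω | Fintype.card ι ≤ 2 * #{i | ω ∈ E i}}
      = {ω | Fintype.card ι / 2 ≤ (∑ i, X i) ω} := by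
    ext ω
    show Fintype.card ι ≤ 2 * #{i | ω ∈ E i} ↔ (Fintype.card ι : ℝ) / 2 ≤ (∑ i, X i) ω
    rw [hsum, div_le_iff₀ two_pos, mul_comm]
    norm_cast
  -- the optimal Chernoff exponent: `1 + p (e ^ l - 1) = 2 q`
  set l := log (q / p)
  have hl : 0 ≤ l := log_nonneg ((one_le_div hp0).2 (by linarith))
  have hmgf_le : ∀ i, mgf (X i) μ l ≤ 2 * q := fun i => by
    have hratio : 0 ≤ q / p - 1 := by rw [sub_nonneg, one_le_div hp0]; linarith
    rw [mgf_indicator_one (hE i), exp_log (by positivity)]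
    calc 1 + μ.real (E i) * (q / p - 1) ≤ 1 + p * (q / p - 1) := by
          have := mul_le_mul_of_nonneg_right (hp i) hratio
          linarith
      _ = 2 * q := by field_simp; ring
  have hbound : ∀ ω, (∑ i, X i) ω ≤ Fintype.card ι := fun ω => by
    rw [hsum]; exact Nat.cast_le.2 (card_le_univ _)
  rw [hevent, ← ofReal_measureReal]
  refine ENNReal.ofReal_le_ofReal ?_
  calc μ.real {ω | Fintype.card ι / 2 ≤ (∑ i, X i) ω}
      ≤ exp (-l * (Fintype.card ι / 2)) * mgf (∑ i, X i) μ l :=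
        measure_ge_le_exp_mul_mgf _ hl
          (integrable_exp_mul_of_le l (Fintype.card ι) hl (by fun_prop) (ae_of_all _ hbound))
    _ ≤ exp (-l * (Fintype.card ι / 2)) * (2 * q) ^ Fintype.card ι := by
        have hfactor : mgf (∑ i, X i) μ l = ∏ i, mgf (X i) μ l :=
          hind.iIndepFun_indicator.mgf_sum hX univ
        rw [hfactor, ← card_univ, ← prod_const]
        gcongr with i
        · exact fun _ _ => mgf_nonneg
        · exact hmgf_le i
    _ = exp (Fintype.card ι / 2 * log (4 * p * q)) := by
        rw [← exp_log (by positivity : 0 < 2 * q), ← exp_nat_mul, ← exp_add,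
          show l = log q - log p from log_div hq.ne' hp0.ne', log_mul two_ne_zero hq.ne',
          log_mul (by positivity) hq.ne', log_mul (by norm_num) hp0.ne',
          show (4 : ℝ) = 2 ^ 2 by norm_num, log_pow]
        push_cast
        ring_nf

end ProbabilityTheory

theorem stmt5_general
    {Ω : Type*} [MeasureSpace Ω] [IsProbabilityMeasure (ℙ : Measure Ω)]
    {K : ℕ} {σ : ℝ} (hσ : 0 < σ)
    (nk : Fin K → ℕ) (hnk : ∀ k, 1 ≤ nk k)
    (c : Fin K → Ω → ℝ) (hcmeas : ∀ k, Measurable (c k))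
    (hlaw : ∀ k, Measure.map (c k) ℙ
      = Measure.map (fun x => σ ^ 2 / (nk k : ℝ) * x) (gammaMeasure ((nk k : ℝ) / 2) (1 / 2)))
    (hindep : iIndepFun c ℙ)
    (n0 ninf : ℕ) (hn0 : IsLeast (Set.range nk) n0) (hninf : IsGreatest (Set.range nk) ninf)
    (t : ℝ) (ht : 0 ≤ t)
    (p : ℝ)
    (hp : p = (gammaMeasure ((ninf : ℝ) / 2) (1 / 2)
        {x | (ninf : ℝ) + 2 * (ninf : ℝ) * t ≤ x}).toReal)
    (hphalf : p ≤ 1 / 2) :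
    ℙ {ω | sampleMedian (fun k => c k ω)
          ≥ ((n0 : ℝ) / (ninf : ℝ))⁻¹ * σ ^ 2 + 2 * σ ^ 2 * ((n0 : ℝ) / (ninf : ℝ))⁻¹ * t}
      ≤ ENNReal.ofReal (Real.exp ((K : ℝ) / 2 * Real.log (4 * p * (1 - p)))) := by
  obtain ⟨⟨k₀, hk₀⟩, hn0_le⟩ := hn0
  set a := ((n0 : ℝ) / (ninf : ℝ))⁻¹ * σ ^ 2 + 2 * σ ^ 2 * ((n0 : ℝ) / (ninf : ℝ))⁻¹ * t
  have hE : ∀ k, MeasurableSet {ω | a ≤ c k ω} := fun k => hcmeas k measurableSet_Ici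
  have htail : ∀ k, (ℙ : Measure Ω).real {ω | a ≤ c k ω} ≤ p := fun k => by
    have : IsProbabilityMeasure (gammaMeasure ((ninf : ℝ) / 2) (1 / 2)) :=
      have : (1 : ℝ) ≤ ninf := by exact_mod_cast (hnk k₀).trans (hninf.2 ⟨k₀, rfl⟩)
      isProbabilityMeasure_gammaMeasure (by linarith) (by norm_num)
    rw [hp, measureReal_def]
    refine ENNReal.toReal_mono (measure_ne_top _ _) ?_
    rw [show {ω | a ≤ c k ω} = c k ⁻¹' Set.Ici a from rfl,
      ← Measure.map_apply (hcmeas k) measurableSet_Ici, hlaw k]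
    exact gammaMeasure_map_const_mul_tail_le (hk₀ ▸ hnk k₀) (hn0_le ⟨k, rfl⟩)
      (hninf.2 ⟨k, rfl⟩) hσ.ne' ht
  have hindep_tail : iIndepSet (fun k => {ω | a ≤ c k ω}) ℙ :=
    (iIndepSet_iff_meas_biInter hE).2 fun S =>
      hindep.measure_inter_preimage_eq_mul S fun _ _ => measurableSet_Ici
  calc ℙ {ω | sampleMedian (fun k => c k ω) ≥ a}
      ≤ ℙ {ω | K ≤ 2 * #{k | a ≤ c k ω}} :=
        measure_mono fun ω hω => le_two_mul_card_of_le_sampleMedian hω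
    _ ≤ _ := by
        simpa using hindep_tail.measure_card_le_two_mul_card_le hE
          (hp ▸ ENNReal.toReal_nonneg) htail hphalf

/-- Let `(c k)_{k < K}` (`K = K_f ≥ 1`) be independent random variables with
`c k ~ (σ²/n_k)·χ²(n_k)`, `n₀ = min_k n_k`, `n_∞ = max_k n_k`, `β = n₀/n_∞`, and let
`σ̂²_med` be the sample median of the `c k`.  For `t ≥ 0` with
`p⁺(t) = P(Γ_{n_∞} ≥ n_∞ + 2 n_∞ t) ≤ 1/2` (`Γ_{n_∞} ~ χ²(n_∞)`),
`P(σ̂²_med ≥ β⁻¹σ² + 2σ²β⁻¹t) ≤ exp((K/2)·ln(4 p⁺(t)(1 − p⁺(t))))`. -/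
theorem stmt5
    {Ω : Type*} [MeasureSpace Ω] [IsProbabilityMeasure (ℙ : Measure Ω)]
    {K : ℕ} (hK : 1 ≤ K) {σ : ℝ} (hσ : 0 < σ)
    (nk : Fin K → ℕ) (hnk : ∀ k, 1 ≤ nk k)
    (c : Fin K → Ω → ℝ) (hcmeas : ∀ k, Measurable (c k))
    (hlaw : ∀ k, Measure.map (c k) ℙ
      = Measure.map (fun x => σ ^ 2 / (nk k : ℝ) * x) (gammaMeasure ((nk k : ℝ) / 2) (1 / 2)))
    (hindep : iIndepFun c ℙ)
    (n0 ninf : ℕ) (hn0 : IsLeast (Set.range nk) n0) (hninf : IsGreatest (Set.range nk) ninf)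
    (t : ℝ) (ht : 0 ≤ t)
    (p : ℝ)
    (hp : p = (gammaMeasure ((ninf : ℝ) / 2) (1 / 2)
        {x | (ninf : ℝ) + 2 * (ninf : ℝ) * t ≤ x}).toReal)
    (hphalf : p ≤ 1 / 2) :
    ℙ {ω | sampleMedian (fun k => c k ω)
          ≥ ((n0 : ℝ) / (ninf : ℝ))⁻¹ * σ ^ 2 + 2 * σ ^ 2 * ((n0 : ℝ) / (ninf : ℝ))⁻¹ * t}
      ≤ ENNReal.ofReal (Real.exp ((K : ℝ) / 2 * Real.log (4 * p * (1 - p)))) :=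
  stmt5_general hσ nk hnk c hcmeas hlaw hindep n0 ninf hn0 hninf t ht p hp hphalf
end

section
/- Let Z follow the binomial distribution B(n, p) with n ≥ 1 and 0 < p ≤ 1/2. Then P( Z ≥ ⌈n/2⌉ ) ≤ exp( (n/2) · ln( 4p(1 − p) ) ). -/
open MeasureTheory ProbabilityTheory Real
open scoped ENNReal

/-!
Every term of the upper half of the binomial sum is at most `√(p(1-p))ⁿ`: for `n ≤ 2m` and
`p ≤ 1 - p`, moving factors from `p^m` to `(1-p)^(n-m)` until both exponents are `n/2` can only
increase the term. Summing the binomial coefficients over the upper half gives at most `2ⁿ`, and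
`2ⁿ √(p(1-p))ⁿ = √(4p(1-p))ⁿ = exp((n/2) log(4p(1-p)))`.
-/

section Measure

variable {Ω : Type*} [MeasurableSpace Ω] {μ : Measure Ω} {Z : Ω → ℕ} {n : ℕ}

lemma measure_lt_eq_zero_of_forall_lt (h : ∀ m, n < m → μ {ω | Z ω = m} = 0) :
    μ {ω | n < Z ω} = 0 := by
  have hunion : {ω | n < Z ω} = ⋃ m ∈ Set.Ioi n, {ω | Z ω = m} := by ext; simp
  rw [hunion, measure_biUnion_null_iff (Set.to_countable _)]
  exact h

lemma measure_le_le_sum_Icc (h : ∀ m, n < m → μ {ω | Z ω = m} = 0) (k : ℕ) :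
    μ {ω | k ≤ Z ω} ≤ ∑ m ∈ Finset.Icc k n, μ {ω | Z ω = m} := by
  have hsplit : {ω | k ≤ Z ω} ⊆ (⋃ m ∈ Finset.Icc k n, {ω | Z ω = m}) ∪ {ω | n < Z ω} := by
    intro ω hω
    by_cases hZn : Z ω ≤ n
    · left
      simp only [Set.mem_iUnion, Set.mem_ofPred_eq, Finset.mem_Icc]
      exact ⟨Z ω, ⟨hω, hZn⟩, rfl⟩
    · exact Or.inr (not_le.mp hZn)
  calc μ {ω | k ≤ Z ω}
      ≤ μ (⋃ m ∈ Finset.Icc k n, {ω | Z ω = m}) + μ {ω | n < Z ω} :=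
        (measure_mono hsplit).trans (measure_union_le _ _)
    _ = μ (⋃ m ∈ Finset.Icc k n, {ω | Z ω = m}) := by
        rw [measure_lt_eq_zero_of_forall_lt h, add_zero]
    _ ≤ ∑ m ∈ Finset.Icc k n, μ {ω | Z ω = m} := measure_biUnion_finset_le _ _

end Measure

lemma pow_mul_pow_sub_le_sqrt_mul_pow {p q : ℝ} (hp : 0 ≤ p) (hpq : p ≤ q) {m n : ℕ}
    (hnm : n ≤ 2 * m) (hmn : m ≤ n) : p ^ m * q ^ (n - m) ≤ √(p * q) ^ n := by
  have hq : 0 ≤ q := hp.trans hpq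
  obtain ⟨d, hd⟩ : ∃ d, 2 * m = n + d := ⟨2 * m - n, by omega⟩
  have hsq : (p ^ m * q ^ (n - m)) ^ 2 ≤ (√(p * q) ^ n) ^ 2 := by
    have hlhs : (p ^ m * q ^ (n - m)) ^ 2 = p ^ n * q ^ (n - d) * p ^ d := by
      rw [mul_pow, ← pow_mul, ← pow_mul, mul_comm m, mul_comm (n - m),
        show 2 * (n - m) = n - d by omega, hd, pow_add]
      ring
    have hrhs : (√(p * q) ^ n) ^ 2 = p ^ n * q ^ (n - d) * q ^ d := by
      rw [← pow_mul, mul_comm n, pow_mul, sq_sqrt (mul_nonneg hp hq), mul_pow,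
        mul_assoc, ← pow_add, show n - d + d = n by omega]
    rw [hlhs, hrhs]
    gcongr
  exact (pow_le_pow_iff_left₀ (by positivity) (by positivity) two_ne_zero).1 hsq

lemma sum_Icc_choose_mul_pow_le {p q : ℝ} (hp : 0 ≤ p) (hpq : p ≤ q) {n k : ℕ}
    (hk : n ≤ 2 * k) :
    ∑ m ∈ Finset.Icc k n, (n.choose m : ℝ) * p ^ m * q ^ (n - m) ≤ √(4 * p * q) ^ n := by
  have hchoose : ∑ m ∈ Finset.Icc k n, (n.choose m : ℝ) ≤ 2 ^ n := by
    have hsub : Finset.Icc k n ⊆ Finset.range (n + 1) := fun m hm => by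
      simp only [Finset.mem_Icc, Finset.mem_range] at hm ⊢; omega
    exact_mod_cast (Finset.sum_le_sum_of_subset hsub).trans_eq (Nat.sum_range_choose n)
  calc ∑ m ∈ Finset.Icc k n, (n.choose m : ℝ) * p ^ m * q ^ (n - m)
      ≤ ∑ m ∈ Finset.Icc k n, (n.choose m : ℝ) * √(p * q) ^ n := by
        refine Finset.sum_le_sum fun m hm => ?_
        rw [Finset.mem_Icc] at hm
        rw [mul_assoc]
        gcongr
        exact pow_mul_pow_sub_le_sqrt_mul_pow hp hpq (by omega) hm.2
    _ = (∑ m ∈ Finset.Icc k n, (n.choose m : ℝ)) * √(p * q) ^ n := (Finset.sum_mul ..).symm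
    _ ≤ 2 ^ n * √(p * q) ^ n := by gcongr
    _ = √(4 * p * q) ^ n := by
        rw [← mul_pow, mul_assoc 4, sqrt_mul (by norm_num : (0 : ℝ) ≤ 4) (p * q),
          show √(4 : ℝ) = 2 by rw [show (4 : ℝ) = 2 ^ 2 by norm_num, sqrt_sq (by norm_num)]]

lemma exp_half_mul_log_eq_sqrt_pow {x : ℝ} (hx : 0 < x) (n : ℕ) :
    exp ((n : ℝ) / 2 * log x) = √x ^ n := by
  rw [div_mul_eq_mul_div, mul_div_assoc, ← log_sqrt hx.le, exp_nat_mul,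
    exp_log (sqrt_pos.mpr hx)]

theorem stmt7_general
    {Ω : Type*} [MeasureSpace Ω]
    {n : ℕ} {p : ℝ} (hp0 : 0 < p) (hp : p ≤ 1 / 2)
    (Z : Ω → ℕ)
    (hZ : ∀ m : ℕ, ℙ {ω | Z ω = m}
      = ENNReal.ofReal ((n.choose m : ℝ) * p ^ m * (1 - p) ^ (n - m))) :
    ℙ {ω | ⌈(n : ℝ) / 2⌉₊ ≤ Z ω}
      ≤ ENNReal.ofReal (Real.exp ((n : ℝ) / 2 * Real.log (4 * p * (1 - p)))) := by
  have htail : ∀ m, n < m → ℙ {ω | Z ω = m} = 0 := fun m hm => by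
    simp [hZ, Nat.choose_eq_zero_of_lt hm]
  have hceil : n ≤ 2 * ⌈(n : ℝ) / 2⌉₊ := by
    have := Nat.le_ceil ((n : ℝ) / 2)
    exact_mod_cast (by linarith : (n : ℝ) ≤ 2 * ⌈(n : ℝ) / 2⌉₊)
  calc ℙ {ω | ⌈(n : ℝ) / 2⌉₊ ≤ Z ω}
      ≤ ∑ m ∈ Finset.Icc ⌈(n : ℝ) / 2⌉₊ n, ℙ {ω | Z ω = m} := measure_le_le_sum_Icc htail _
    _ = ENNReal.ofReal (∑ m ∈ Finset.Icc ⌈(n : ℝ) / 2⌉₊ n,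
          (n.choose m : ℝ) * p ^ m * (1 - p) ^ (n - m)) := by
        simp only [hZ]
        rw [ENNReal.ofReal_sum_of_nonneg fun m _ =>
          mul_nonneg (by positivity) (pow_nonneg (by linarith) _)]
    _ ≤ ENNReal.ofReal (√(4 * p * (1 - p)) ^ n) :=
        ENNReal.ofReal_le_ofReal (sum_Icc_choose_mul_pow_le hp0.le (by linarith) hceil)
    _ = ENNReal.ofReal (Real.exp ((n : ℝ) / 2 * Real.log (4 * p * (1 - p)))) := by
        rw [exp_half_mul_log_eq_sqrt_pow (by nlinarith)]

/-- Let `Z` follow the binomial distribution `B(n, p)` with `n ≥ 1` and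
`0 < p ≤ 1/2`, i.e. `P(Z = m) = C(n,m) pᵐ (1−p)^{n−m}` for every `m`.  Then
`P(Z ≥ ⌈n/2⌉) ≤ exp((n/2)·ln(4p(1−p)))`. -/
theorem stmt7
    {Ω : Type*} [MeasureSpace Ω] [IsProbabilityMeasure (ℙ : Measure Ω)]
    {n : ℕ} (hn : 1 ≤ n) {p : ℝ} (hp0 : 0 < p) (hp : p ≤ 1 / 2)
    (Z : Ω → ℕ) (hZmeas : Measurable Z)
    (hZ : ∀ m : ℕ, ℙ {ω | Z ω = m}
      = ENNReal.ofReal ((n.choose m : ℝ) * p ^ m * (1 - p) ^ (n - m))) :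
    ℙ {ω | ⌈(n : ℝ) / 2⌉₊ ≤ Z ω}
      ≤ ENNReal.ofReal (Real.exp ((n : ℝ) / 2 * Real.log (4 * p * (1 - p)))) :=
  stmt7_general hp0 hp Z hZ
end
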